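/- There exists a constant c such that for all binary strings x and y there exists a pair of natural numbers (k,l) with |C(x|l) − k| ≤ c and |C(y|x,k) − l| ≤ c; moreover this pair is unique up to O(1): any two pairs (k,l), (k',l') both satisfying these conditions satisfy |k − k'| ≤ c and |l − l'| ≤ c. -/

import Mathlib

/-!
A program for `x` given `n`, prefixed by a self-delimiting binary description of `m - n`
(`O(log |m - n|)` bits), is a program for `x` given `m`; so `C(x|m)` and `C(x|n)` differ by
`O(log |m - n|)`, and likewise for the second component of a paired condition.
Hence `h l = C(y | x, C(x|l))` drops by at most `O(1)` when `l` grows by one, and `h` is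
bounded, so a discrete intermediate value argument gives `l` with `l ≤ h l ≤ l + O(1)`.
For uniqueness, `|k - k'| = O(log |l - l'|)` and `|l - l'| = O(log |k - k'|)`, which forces
both to be `O(1)`.
-/

/-- Binary strings. -/
abbrev BinStr := List Bool

/-- Standard encoding of a binary string as a natural number. -/
def enc (a : BinStr) : ℕ := Encodable.encode a

/-- A (conditional) machine: it takes a program (a binary string) and a condition
(a natural number, which encodes the conditioning data: a number, a string via `enc`,
or a tuple combined with the standard pairing `Nat.pair`) and possibly outputs a
natural number (encoding the result in the same way). -/
abbrev Machine := BinStr → ℕ →. ℕ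

/-- Conditional Kolmogorov complexity of `x` given condition `y`, with respect to the
machine `U`: the minimal length of a program `p` such that `U p y = x`. -/
noncomputable def cplx (U : Machine) (x y : ℕ) : ℕ :=
  sInf {n | ∃ p : BinStr, p.length = n ∧ x ∈ U p y}

/-- Unconditional Kolmogorov complexity: conditional complexity with the trivial
condition `0`. -/
noncomputable def cplx0 (U : Machine) (x : ℕ) : ℕ := cplx U x 0

/-- `U` is an optimal universal machine for plain complexity: it is partial computable
and simulates every partial computable machine with at most a constant overhead in
program length. -/
def IsOptimal (U : Machine) : Prop :=
  Partrec₂ U ∧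
    ∀ V : Machine, Partrec₂ V →
      ∃ c : ℕ, ∀ (p : BinStr) (y x : ℕ), x ∈ V p y →
        ∃ q : BinStr, q.length ≤ p.length + c ∧ x ∈ U q y

/-- A machine is prefix-free if, for every condition, the set of its halting programs
is prefix-free: no halting program is a proper prefix of another halting program. -/
def PrefixFreeMachine (M : Machine) : Prop :=
  ∀ (y : ℕ) (p q : BinStr), p <+: q → (M p y).Dom → (M q y).Dom → p = q

/-- `U` is an optimal universal prefix-free machine: it is partial computable,
prefix-free, and simulates every partial computable prefix-free machine with at most
a constant overhead in program length. -/
def IsPrefixOptimal (U : Machine) : Prop :=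
  Partrec₂ U ∧ PrefixFreeMachine U ∧
    ∀ V : Machine, Partrec₂ V → PrefixFreeMachine V →
      ∃ c : ℕ, ∀ (p : BinStr) (y x : ℕ), x ∈ V p y →
        ∃ q : BinStr, q.length ≤ p.length + c ∧ x ∈ U q y

theorem Nat.dist_le_iff {a b e : ℕ} : Nat.dist a b ≤ e ↔ a ≤ b + e ∧ b ≤ a + e := by
  unfold Nat.dist
  omega

theorem Nat.four_mul_succ_le_two_pow_add (t : ℕ) : 4 * (t + 1) ≤ 2 ^ t + 16 := by
  rcases Nat.lt_or_ge t 2 with ht | ht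
  · interval_cases t <;> norm_num
  · induction t, ht using Nat.le_induction with
    | base => norm_num
    | succ t ht ih =>
      have : 4 ≤ 2 ^ t := Nat.pow_le_pow_right (by norm_num) ht |>.trans' (by norm_num)
      rw [pow_succ]
      omega

theorem Nat.four_mul_size_le (n : ℕ) : 4 * n.size ≤ n + 16 := by
  rcases Nat.eq_zero_or_pos n.size with hs | hs
  · omega
  · have hpow : 2 ^ (n.size - 1) ≤ n := Nat.lt_size.1 (by omega)
    have := Nat.four_mul_succ_le_two_pow_add (n.size - 1)
    rw [Nat.sub_add_cancel hs] at this
    omega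

theorem Nat.le_and_le_of_le_two_mul_size_add {D E A B : ℕ} (hD : D ≤ 2 * E.size + B)
    (hE : E ≤ 2 * D.size + A) : D ≤ 2 * A + 2 * B + 16 ∧ E ≤ 2 * A + 2 * B + 16 := by
  have := Nat.four_mul_size_le D
  have := Nat.four_mul_size_le E
  omega

theorem Nat.exists_le_and_le_add_of_le_succ_add {h : ℕ → ℕ} {c N : ℕ}
    (hstep : ∀ n, h n ≤ h (n + 1) + c) (hN : h N < N) : ∃ l, l ≤ h l ∧ h l ≤ l + c := by
  have hex : ∃ n, h n < n := ⟨N, hN⟩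
  obtain ⟨m, hm⟩ : ∃ m, Nat.find hex = m + 1 :=
    Nat.exists_eq_succ_of_ne_zero fun h0 => by simpa [h0] using Nat.find_spec hex
  have hlt : h (m + 1) < m + 1 := hm ▸ Nat.find_spec hex
  have hge : ¬ h m < m := Nat.find_min hex (by omega)
  exact ⟨m, by omega, by have := hstep m; omega⟩

namespace BinStr

def ofBits (u : BinStr) : ℕ := u.foldr Nat.bit 0

theorem ofBits_bits (n : ℕ) : ofBits n.bits = n := by
  induction n using Nat.binaryRec' with
  | zero => rfl
  | bit b n hb ih => rw [Nat.bits_append_bit n b hb, ofBits, List.foldr_cons, ← ofBits, ih]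

def pairCode (u q : BinStr) : BinStr := List.replicate u.length true ++ false :: (u ++ q)

def unpairCode (p : BinStr) : BinStr × BinStr :=
  let r := p.dropWhile id
  (r.tail.take (p.takeWhile id).length, r.tail.drop (p.takeWhile id).length)

theorem unpairCode_pairCode (u q : BinStr) : unpairCode (pairCode u q) = (u, q) := by
  have hw : (pairCode u q).takeWhile id = List.replicate u.length true := by
    simp [pairCode]
  have hd : (pairCode u q).dropWhile id = false :: (u ++ q) := by
    simp [pairCode]
  simp [unpairCode, hw, hd]

theorem length_pairCode (u q : BinStr) :
    (pairCode u q).length = 2 * u.length + 1 + q.length := by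
  simp only [pairCode, List.length_append, List.length_replicate, List.length_cons]
  omega

theorem primrec_unpairCode : Primrec unpairCode := by
  have hw := Primrec.list_length.comp (Primrec.list_takeWhile (p := id) Primrec.id)
  have hr := Primrec.list_tail.comp (Primrec.list_dropWhile (p := id) Primrec.id)
  exact (Primrec.pair (Primrec.list_take.comp hw hr) (Primrec.list_drop.comp hw hr)).of_eq
    fun _ => rfl

theorem primrec_ofBits : Primrec ofBits := by
  have : Primrec₂ fun (_ : BinStr) (p : Bool × ℕ) => Nat.bit p.1 p.2 :=
    (Primrec.cond (Primrec.fst.comp Primrec.snd)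
      (Primrec.nat_double_succ.comp (Primrec.snd.comp Primrec.snd))
      (Primrec.nat_double.comp (Primrec.snd.comp Primrec.snd))).to₂.of_eq fun _ p => by
        cases p.1 <;> rfl
  exact (Primrec.list_foldr Primrec.id (Primrec.const 0) this).of_eq fun _ => rfl

/-- `shift n (b :: bits d)` is `n + d` if `b` and `n - d` otherwise. -/
def shift (n : ℕ) (u : BinStr) : ℕ := bif u.headI then n + ofBits u.tail else n - ofBits u.tail

theorem exists_shift_eq (m n : ℕ) :
    ∃ u, shift m u = n ∧ u.length = (Nat.dist m n).size + 1 := by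
  refine ⟨decide (m ≤ n) :: (Nat.dist m n).bits, ?_, by simp [Nat.size_eq_bits_len]⟩
  by_cases h : m ≤ n
  · simp [shift, h, ofBits_bits, Nat.dist_eq_sub_of_le h]
  · simp [shift, h, ofBits_bits, Nat.dist_eq_sub_of_le_right (Nat.le_of_not_le h)]
    omega

theorem primrec_shift : Primrec₂ shift := by
  have hv : Primrec fun p : ℕ × BinStr => ofBits p.2.tail :=
    primrec_ofBits.comp (Primrec.list_tail.comp Primrec.snd)
  exact (Primrec.cond (Primrec.list_headI.comp Primrec.snd) (Primrec.nat_add.comp Primrec.fst hv)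
    (Primrec.nat_sub.comp Primrec.fst hv)).to₂

end BinStr

namespace Machine

def withAdvice (U : Machine) (g : ℕ → BinStr → ℕ) : Machine :=
  fun p y => U (BinStr.unpairCode p).2 (g y (BinStr.unpairCode p).1)

theorem partrec_withAdvice {U : Machine} {g : ℕ → BinStr → ℕ} (hU : Partrec₂ U)
    (hg : Computable₂ g) : Partrec₂ (U.withAdvice g) := by
  have hc : Computable fun a : BinStr × ℕ => BinStr.unpairCode a.1 :=
    (BinStr.primrec_unpairCode.comp Primrec.fst).to_comp
  exact hU.comp (Computable.snd.comp hc) (hg.comp Computable.snd (Computable.fst.comp hc))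

end Machine

theorem cplx_le_length {U : Machine} {x y : ℕ} {p : BinStr} (h : x ∈ U p y) :
    cplx U x y ≤ p.length :=
  Nat.sInf_le ⟨p, rfl, h⟩

theorem exists_length_eq_cplx {U : Machine} {x y : ℕ} {p : BinStr} (h : x ∈ U p y) :
    ∃ q : BinStr, q.length = cplx U x y ∧ x ∈ U q y :=
  Nat.sInf_mem (s := {n | ∃ q : BinStr, q.length = n ∧ x ∈ U q y}) ⟨p.length, p, rfl, h⟩

namespace IsOptimal

variable {U : Machine}

theorem exists_program (hU : IsOptimal U) :
    ∃ c, ∀ x y, ∃ p : BinStr, p.length ≤ x + c ∧ x ∈ U p y := by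
  have hV : Partrec₂ fun (p : BinStr) (_ : ℕ) => Part.some p.length :=
    (Computable.list_length.comp Computable.fst).partrec
  obtain ⟨c, hc⟩ := hU.2 _ hV
  exact ⟨c, fun x y => by simpa using hc (List.replicate x true) y x (by simp)⟩

theorem exists_cplx_le (hU : IsOptimal U) : ∃ c, ∀ x y, cplx U x y ≤ x + c := by
  obtain ⟨c, hc⟩ := hU.exists_program
  refine ⟨c, fun x y => ?_⟩
  obtain ⟨p, hp, hxp⟩ := hc x y
  exact (cplx_le_length hxp).trans hp

theorem cplx_le_cplx_withAdvice (hU : IsOptimal U) {g : ℕ → BinStr → ℕ}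
    (hg : Computable₂ g) :
    ∃ c, ∀ x y u, cplx U x y ≤ cplx U x (g y u) + 2 * u.length + c := by
  obtain ⟨c₀, hc₀⟩ := hU.exists_program
  obtain ⟨c, hc⟩ := hU.2 _ (Machine.partrec_withAdvice hU.1 hg)
  refine ⟨c + 1, fun x y u => ?_⟩
  obtain ⟨p₀, -, hp₀⟩ := hc₀ x (g y u)
  obtain ⟨p, hp, hxp⟩ := exists_length_eq_cplx hp₀
  have hcode : x ∈ U.withAdvice g (BinStr.pairCode u p) y := by
    simpa [Machine.withAdvice, BinStr.unpairCode_pairCode] using hxp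
  obtain ⟨q, hq, hxq⟩ := hc _ _ _ hcode
  have := BinStr.length_pairCode u p
  have := cplx_le_length hxq
  omega

theorem dist_cplx_le (hU : IsOptimal U) :
    ∃ c, ∀ x m n, Nat.dist (cplx U x m) (cplx U x n) ≤ 2 * (Nat.dist m n).size + c := by
  obtain ⟨c, hc⟩ := hU.cplx_le_cplx_withAdvice BinStr.primrec_shift.to_comp
  have hle : ∀ x m n, cplx U x m ≤ cplx U x n + (2 * (Nat.dist m n).size + (c + 2)) := by
    intro x m n
    obtain ⟨u, hu, hlen⟩ := BinStr.exists_shift_eq m n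
    have := hc x m u
    rw [hu, hlen] at this
    omega
  exact ⟨c + 2, fun x m n => Nat.dist_le_iff.2 ⟨hle x m n, Nat.dist_comm m n ▸ hle x n m⟩⟩

theorem dist_cplx_pair_le (hU : IsOptimal U) :
    ∃ c, ∀ x z m n, Nat.dist (cplx U x (Nat.pair z m)) (cplx U x (Nat.pair z n)) ≤
      2 * (Nat.dist m n).size + c := by
  have hg : Primrec₂ fun (y : ℕ) (u : BinStr) =>
      Nat.pair y.unpair.1 (BinStr.shift y.unpair.2 u) :=
    Primrec₂.natPair.comp (Primrec.fst.comp (Primrec.unpair.comp Primrec.fst))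
      (BinStr.primrec_shift.comp (Primrec.snd.comp (Primrec.unpair.comp Primrec.fst))
        Primrec.snd)
  obtain ⟨c, hc⟩ := hU.cplx_le_cplx_withAdvice hg.to_comp
  have hle : ∀ x z m n, cplx U x (Nat.pair z m) ≤
      cplx U x (Nat.pair z n) + (2 * (Nat.dist m n).size + (c + 2)) := by
    intro x z m n
    obtain ⟨u, hu, hlen⟩ := BinStr.exists_shift_eq m n
    have := hc x (Nat.pair z m) u
    simp only [Nat.unpair_pair, hu, hlen] at this
    omega
  exact ⟨c + 2, fun x z m n =>
    Nat.dist_le_iff.2 ⟨hle x z m n, Nat.dist_comm m n ▸ hle x z n m⟩⟩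

end IsOptimal

/-- For all `x`, `y` there is a pair `(k,l)` with `C(x|l) = k + O(1)`
and `C(y|x,k) = l + O(1)`, and this pair is unique up to `O(1)`. -/
theorem fixed_point_pair (U : Machine) (hU : IsOptimal U) :
    (∃ c : ℕ, ∀ x y : BinStr, ∃ k l : ℕ,
        |(cplx U (enc x) l : ℤ) - (k : ℤ)| ≤ (c : ℤ) ∧
        |(cplx U (enc y) (Nat.pair (enc x) k) : ℤ) - (l : ℤ)| ≤ (c : ℤ)) ∧
    (∀ c₀ : ℕ, ∃ c : ℕ, ∀ (x y : BinStr) (k l k' l' : ℕ),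
        |(cplx U (enc x) l : ℤ) - (k : ℤ)| ≤ (c₀ : ℤ) →
        |(cplx U (enc y) (Nat.pair (enc x) k) : ℤ) - (l : ℤ)| ≤ (c₀ : ℤ) →
        |(cplx U (enc x) l' : ℤ) - (k' : ℤ)| ≤ (c₀ : ℤ) →
        |(cplx U (enc y) (Nat.pair (enc x) k') : ℤ) - (l' : ℤ)| ≤ (c₀ : ℤ) →
        |(k : ℤ) - (k' : ℤ)| ≤ (c : ℤ) ∧ |(l : ℤ) - (l' : ℤ)| ≤ (c : ℤ)) := by
  obtain ⟨c₀, hc₀⟩ := hU.exists_cplx_le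
  obtain ⟨c₁, hc₁⟩ := hU.dist_cplx_le
  obtain ⟨c₂, hc₂⟩ := hU.dist_cplx_pair_le
  constructor
  · refine ⟨2 * (2 + c₁).size + c₂, fun x y => ?_⟩
    let k n := cplx U (enc x) n
    let h n := cplx U (enc y) (Nat.pair (enc x) (k n))
    have hstep : ∀ n, h n ≤ h (n + 1) + (2 * (2 + c₁).size + c₂) := fun n => by
      have hk : Nat.dist (k n) (k (n + 1)) ≤ 2 + c₁ := by
        simpa [Nat.dist_eq_sub_of_le (Nat.le_succ n), add_comm] using hc₁ (enc x) n (n + 1)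
      have hh := (hc₂ (enc y) (enc x) (k n) (k (n + 1))).trans
        (Nat.add_le_add_right (Nat.mul_le_mul_left 2 (Nat.size_le_size hk)) c₂)
      exact (Nat.dist_le_iff.1 hh).1
    obtain ⟨l, hl⟩ := Nat.exists_le_and_le_add_of_le_succ_add hstep
      (N := enc y + c₀ + 1) (Nat.lt_succ_of_le (hc₀ _ _))
    simp only [h] at hl
    refine ⟨k l, l, by simp only [k, sub_self, abs_zero]; positivity, ?_⟩
    exact abs_le.2 ⟨by omega, by omega⟩
  · intro c
    refine ⟨2 * (c₁ + 2 * c) + 2 * (c₂ + 2 * c) + 16, fun x y k l k' l' hk hl hk' hl' => ?_⟩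
    rw [abs_le] at hk hl hk' hl'
    have hkk : Nat.dist k k' ≤ 2 * (Nat.dist l l').size + (c₁ + 2 * c) := by
      have := Nat.dist_le_iff.1 (hc₁ (enc x) l l')
      exact Nat.dist_le_iff.2 ⟨by omega, by omega⟩
    have hll : Nat.dist l l' ≤ 2 * (Nat.dist k k').size + (c₂ + 2 * c) := by
      have := Nat.dist_le_iff.1 (hc₂ (enc y) (enc x) k k')
      exact Nat.dist_le_iff.2 ⟨by omega, by omega⟩
    obtain ⟨hl, hk⟩ := Nat.le_and_le_of_le_two_mul_size_add hll hkk
    rw [Nat.dist_le_iff] at hl hk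
    exact ⟨abs_le.2 ⟨by omega, by omega⟩, abs_le.2 ⟨by omega, by omega⟩⟩
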